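/- Under the constraint (1/n) Σ_i ν_i = μ, the minimization of F(ν, α) = (1/(2n²)) Σ_{i,j} [(z_{ij}⁺ - (ν_i - ν_j + α))² + (z_{ij}⁻ - (ν_i - ν_j - α))²] over (ν, α) with α ≥ 0 has the unique solution ν_k* = μ + (1/n) Σ_j c_{kj} and α* = (1/(2n²)) Σ_{i,j} ℓ_{ij}, where c_{kj} = (z_{kj}⁺ + z_{kj}⁻)/2 and ℓ_{ij} = z_{ij}⁺ - z_{ij}⁻, assuming Z is a reciprocal interval matrix. -/

import Mathlib

/-!
Writing `c` for the interval midpoints and `r` for the interval radii, each summand of `F` splits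
as `2 (c_{ij} - (ν_i - ν_j))² + 2 (r_{ij} - α)²`, so `F` decouples into a problem in `ν` and one
in `α`. The `α`-part is a sum of squared deviations, minimised exactly at the mean radius `α*`,
which is nonnegative since every radius is. For the `ν`-part, reciprocity makes `c`
antisymmetric, so the residual matrix `c_{ij} - (ν*_i - ν*_j)` has vanishing row and column sums;
it is therefore orthogonal to every matrix `e_i - e_j`, and for `e = ν - ν*` with `∑ e = 0` one
gets the Pythagorean identity `F(ν, α) = F(ν*, α*) + (2/n) ∑ (ν_i - ν*_i)² + (α - α*)²`, which
gives existence and uniqueness.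
-/

open Finset in
/-- The least-squares objective of Model (M_{l₂}):
F(ν,α) = (1/(2n²)) Σ_{i,j} [(z_{ij}⁺ - (ν_i - ν_j + α))² + (z_{ij}⁻ - (ν_i - ν_j - α))²]. -/
noncomputable def Fobj (n : ℕ) (z : Fin n → Fin n → ℝ × ℝ)
    (ν : Fin n → ℝ) (α : ℝ) : ℝ :=
  (1 / (2 * (n : ℝ) ^ 2)) * ∑ i : Fin n, ∑ j : Fin n,
    (((z i j).2 - (ν i - ν j + α)) ^ 2 +
     ((z i j).1 - (ν i - ν j - α)) ^ 2)

open Finset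

section FiniteSums

variable {ι κ : Type*} [Fintype ι] [Fintype κ]

theorem sum_sq_sub_eq_sum_sq_sub_mean_add (f : κ → ℝ) (t : ℝ) :
    ∑ x, (f x - t) ^ 2 =
      ∑ x, (f x - (∑ y, f y) / Fintype.card κ) ^ 2 +
        Fintype.card κ * (t - (∑ y, f y) / Fintype.card κ) ^ 2 := by
  set m := (∑ y, f y) / Fintype.card κ
  have hm : ∑ x, (f x - m) = 0 := by
    rcases isEmpty_or_nonempty κ with hκ | hκ
    · simp
    · rw [sum_sub_distrib, sum_const, card_univ, nsmul_eq_mul,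
        mul_div_cancel₀ _ (by positivity), sub_self]
  have hsplit : ∀ x, (f x - t) ^ 2 = (f x - m) ^ 2 + 2 * (m - t) * (f x - m) + (t - m) ^ 2 :=
    fun x => by ring
  simp only [hsplit, sum_add_distrib, ← mul_sum, hm, sum_const, card_univ, nsmul_eq_mul]
  ring

theorem sum_sum_sub_sq (e : ι → ℝ) :
    ∑ i, ∑ j, (e i - e j) ^ 2 = 2 * Fintype.card ι * ∑ i, e i ^ 2 - 2 * (∑ i, e i) ^ 2 := by
  have hsplit : ∀ i j, (e i - e j) ^ 2 = e i ^ 2 - 2 * e i * e j + e j ^ 2 := fun i j => by ring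
  simp only [hsplit, sum_add_distrib, sum_sub_distrib, ← mul_sum, ← sum_mul, sum_const,
    card_univ, nsmul_eq_mul]
  ring

theorem sum_sum_sq_sub_sub_of_sum_eq_zero {r : ι → ι → ℝ} (hrow : ∀ i, ∑ j, r i j = 0)
    (hcol : ∀ j, ∑ i, r i j = 0) (e : ι → ℝ) :
    ∑ i, ∑ j, (r i j - (e i - e j)) ^ 2 = ∑ i, ∑ j, r i j ^ 2 + ∑ i, ∑ j, (e i - e j) ^ 2 := by
  have hsplit : ∀ i j, (r i j - (e i - e j)) ^ 2 =
      r i j ^ 2 + (e i - e j) ^ 2 - 2 * (r i j * e i) + 2 * (r i j * e j) := fun i j => by ring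
  have hrow' : ∑ i, ∑ j, r i j * e i = 0 := by simp [← sum_mul, hrow]
  have hcol' : ∑ i, ∑ j, r i j * e j = 0 := by rw [sum_comm]; simp [← sum_mul, hcol]
  simp only [hsplit, sum_add_distrib, sum_sub_distrib, ← mul_sum, hrow', hcol']
  ring

theorem sum_sum_eq_zero_of_antisymm {c : ι → ι → ℝ} (hc : ∀ i j, c i j = -c j i) :
    ∑ i, ∑ j, c i j = 0 := by
  have h : ∑ i, ∑ j, c i j = -∑ i, ∑ j, c i j :=
    calc ∑ i, ∑ j, c i j = ∑ j, ∑ i, c i j := sum_comm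
      _ = ∑ j, ∑ i, -c j i := sum_congr rfl fun j _ => sum_congr rfl fun i _ => hc i j
      _ = -∑ j, ∑ i, c j i := by simp only [sum_neg_distrib]
  linarith

/-- The minimiser of `ν ↦ ∑ i j, (c i j - (ν i - ν j))²` with mean `μ`, for antisymmetric `c`. -/
noncomputable def leastSquaresPotential (μ : ℝ) (c : ι → ι → ℝ) (i : ι) : ℝ :=
  μ + (∑ j, c i j) / Fintype.card ι

variable {c : ι → ι → ℝ}

theorem sum_leastSquaresPotential (hc : ∀ i j, c i j = -c j i) (μ : ℝ) :
    ∑ i, leastSquaresPotential μ c i = Fintype.card ι * μ := by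
  simp [leastSquaresPotential, sum_add_distrib, ← sum_div, sum_sum_eq_zero_of_antisymm hc]

theorem sum_sub_leastSquaresPotential (hc : ∀ i j, c i j = -c j i) (μ : ℝ) (i : ι) :
    ∑ j, (c i j - (leastSquaresPotential μ c i - leastSquaresPotential μ c j)) = 0 := by
  have : Nonempty ι := ⟨i⟩
  have : (Fintype.card ι : ℝ) ≠ 0 := Nat.cast_ne_zero.2 Fintype.card_ne_zero
  rw [sum_sub_distrib, sum_sub_distrib, sum_leastSquaresPotential hc, sum_const, card_univ,
    nsmul_eq_mul, leastSquaresPotential]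
  field_simp
  ring

theorem sum_sum_sq_sub_sub_leastSquaresPotential (hc : ∀ i j, c i j = -c j i) {μ : ℝ}
    {ν : ι → ℝ} (hν : ∑ i, ν i = Fintype.card ι * μ) :
    ∑ i, ∑ j, (c i j - (ν i - ν j)) ^ 2 =
      ∑ i, ∑ j, (c i j - (leastSquaresPotential μ c i - leastSquaresPotential μ c j)) ^ 2 +
        2 * Fintype.card ι * ∑ i, (ν i - leastSquaresPotential μ c i) ^ 2 := by
  set p := leastSquaresPotential μ c
  have hrow : ∀ i, ∑ j, (c i j - (p i - p j)) = 0 := sum_sub_leastSquaresPotential hc μ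
  have hcol : ∀ j, ∑ i, (c i j - (p i - p j)) = 0 := fun j => by
    rw [← neg_eq_zero, ← hrow j, ← sum_neg_distrib]
    exact sum_congr rfl fun i _ => by rw [hc i j]; ring
  have he : ∑ i, (ν i - p i) = 0 := by
    rw [sum_sub_distrib, hν, sum_leastSquaresPotential hc, sub_self]
  calc ∑ i, ∑ j, (c i j - (ν i - ν j)) ^ 2
      = ∑ i, ∑ j, (c i j - (p i - p j) - ((ν i - p i) - (ν j - p j))) ^ 2 :=
        sum_congr rfl fun i _ => sum_congr rfl fun j _ => by ring
    _ = _ := by rw [sum_sum_sq_sub_sub_of_sum_eq_zero hrow hcol, sum_sum_sub_sq, he]; ring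

theorem eq_zero_of_mul_sum_sq_add_sq_nonpos {a : ℝ} (ha : 0 < a) {f : ι → ℝ} {b : ℝ}
    (h : a * ∑ i, f i ^ 2 + b ^ 2 ≤ 0) : f = 0 ∧ b = 0 := by
  have hf : 0 ≤ ∑ i, f i ^ 2 := sum_nonneg fun i _ => sq_nonneg (f i)
  have hb := sq_nonneg b
  have hS : ∑ i, f i ^ 2 = 0 := le_antisymm (by nlinarith) hf
  refine ⟨?_, pow_eq_zero_iff two_ne_zero |>.1 (by nlinarith)⟩
  funext i
  exact pow_eq_zero_iff two_ne_zero |>.1 <|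
    congrFun ((Fintype.sum_eq_zero_iff_of_nonneg fun i => sq_nonneg (f i)).1 hS) i

end FiniteSums

section IntervalObjective

noncomputable def intervalMid (p : ℝ × ℝ) : ℝ := (p.2 + p.1) / 2

noncomputable def intervalRad (p : ℝ × ℝ) : ℝ := (p.2 - p.1) / 2

theorem sq_sub_add_add_sq_sub_sub (p : ℝ × ℝ) (d α : ℝ) :
    (p.2 - (d + α)) ^ 2 + (p.1 - (d - α)) ^ 2 =
      2 * (intervalMid p - d) ^ 2 + 2 * (intervalRad p - α) ^ 2 := by
  simp only [intervalMid, intervalRad]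
  ring

variable {n : ℕ} {z : Fin n → Fin n → ℝ × ℝ}

theorem Fobj_eq_mid_add_rad (ν : Fin n → ℝ) (α : ℝ) :
    Fobj n z ν α = (∑ i, ∑ j, (intervalMid (z i j) - (ν i - ν j)) ^ 2 +
      ∑ i, ∑ j, (intervalRad (z i j) - α) ^ 2) / n ^ 2 := by
  simp only [Fobj, sq_sub_add_add_sq_sub_sub, sum_add_distrib, ← mul_sum]
  ring

theorem Fobj_eq_Fobj_add (hn : n ≠ 0) (hz : ∀ i j, intervalMid (z i j) = -intervalMid (z j i))
    {μ : ℝ} {ν : Fin n → ℝ} (hν : ∑ i, ν i = n * μ) (α : ℝ) :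
    Fobj n z ν α =
      Fobj n z (leastSquaresPotential μ fun i j => intervalMid (z i j))
          ((∑ i, ∑ j, intervalRad (z i j)) / n ^ 2) +
        2 / n * ∑ i, (ν i - leastSquaresPotential μ (fun i j => intervalMid (z i j)) i) ^ 2 +
        (α - (∑ i, ∑ j, intervalRad (z i j)) / n ^ 2) ^ 2 := by
  have hrad := sum_sq_sub_eq_sum_sq_sub_mean_add (fun x : Fin n × Fin n => intervalRad (z x.1 x.2)) α
  simp only [Fintype.sum_prod_type, Fintype.card_prod, Fintype.card_fin, Nat.cast_pow,
    ← sq] at hrad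
  have hmid := sum_sum_sq_sub_sub_leastSquaresPotential hz (μ := μ) (by simpa using hν)
  simp only [Fintype.card_fin] at hmid
  rw [Fobj_eq_mid_add_rad, Fobj_eq_mid_add_rad, hrad, hmid]
  have : (n : ℝ) ≠ 0 := by exact_mod_cast hn
  field_simp
  ring

end IntervalObjective

/-- under the constraint (1/n)Σ ν_i = μ and α ≥ 0, F is minimized
uniquely at ν_k* = μ + (1/n)Σ_j c_{kj}, α* = (1/(2n²)) Σ_{i,j} ℓ_{ij}, for a
reciprocal interval matrix Z. -/
theorem constrained_minimizer_unique (n : ℕ) (hn : 0 < n)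
    (z : Fin n → Fin n → ℝ × ℝ) (μ : ℝ)
    (hvalid : ∀ i j, (z i j).1 ≤ (z i j).2)
    (hrec : ∀ i j, (z i j).2 = -(z j i).1 ∧ (z i j).1 = -(z j i).2) :
    let νstar : Fin n → ℝ := fun k =>
      μ + (1 / (n : ℝ)) * ∑ j : Fin n, ((z k j).2 + (z k j).1) / 2
    let αstar : ℝ := (1 / (2 * (n : ℝ) ^ 2)) * ∑ i : Fin n, ∑ j : Fin n,
      ((z i j).2 - (z i j).1)
    ((1 / (n : ℝ)) * ∑ i : Fin n, νstar i = μ) ∧ 0 ≤ αstar ∧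
    (∀ (ν : Fin n → ℝ) (α : ℝ), (1 / (n : ℝ)) * ∑ i : Fin n, ν i = μ → 0 ≤ α →
      Fobj n z νstar αstar ≤ Fobj n z ν α) ∧
    (∀ (ν : Fin n → ℝ) (α : ℝ), (1 / (n : ℝ)) * ∑ i : Fin n, ν i = μ → 0 ≤ α →
      (∀ (ν' : Fin n → ℝ) (α' : ℝ),
        (1 / (n : ℝ)) * ∑ i : Fin n, ν' i = μ → 0 ≤ α' →
          Fobj n z ν α ≤ Fobj n z ν' α') →
      ν = νstar ∧ α = αstar) := by
  intro νstar αstar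
  have hn' : (n : ℝ) ≠ 0 := by positivity
  have hz : ∀ i j, intervalMid (z i j) = -intervalMid (z j i) := fun i j => by
    simp only [intervalMid, (hrec i j).1, (hrec i j).2]; ring
  have hνstar : νstar = leastSquaresPotential μ fun i j => intervalMid (z i j) := by
    funext k; simp [νstar, leastSquaresPotential, intervalMid, div_eq_inv_mul]
  have hαstar : αstar = (∑ i, ∑ j, intervalRad (z i j)) / n ^ 2 := by
    simp only [αstar, intervalRad, ← sum_div]; field_simp
  have hsum : ∀ ν : Fin n → ℝ, 1 / (n : ℝ) * ∑ i, ν i = μ → ∑ i, ν i = n * μ :=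
    fun ν h => by rw [← h]; field_simp
  have hstar_sum : 1 / (n : ℝ) * ∑ i, νstar i = μ := by
    rw [hνstar, sum_leastSquaresPotential hz, Fintype.card_fin]; field_simp
  have hαstar_nonneg : 0 ≤ αstar := mul_nonneg (by positivity) <|
    sum_nonneg fun i _ => sum_nonneg fun j _ => sub_nonneg.2 (hvalid i j)
  have hkey : ∀ ν α, 1 / (n : ℝ) * ∑ i, ν i = μ → Fobj n z ν α =
      Fobj n z νstar αstar + 2 / n * ∑ i, (ν i - νstar i) ^ 2 + (α - αstar) ^ 2 :=
    fun ν α hν => by rw [hνstar, hαstar]; exact Fobj_eq_Fobj_add hn.ne' hz (hsum ν hν) α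
  refine ⟨hstar_sum, hαstar_nonneg, fun ν α hν _ => ?_, fun ν α hν _ hmin => ?_⟩
  · rw [hkey ν α hν, add_assoc]
    exact le_add_of_nonneg_right (by positivity)
  · have h := hmin νstar αstar hstar_sum hαstar_nonneg
    rw [hkey ν α hν] at h
    obtain ⟨hν', hα'⟩ := eq_zero_of_mul_sum_sq_add_sq_nonpos (by positivity : (0 : ℝ) < 2 / n)
      (f := ν - νstar) (b := α - αstar) (by simp only [Pi.sub_apply]; linarith)
    exact ⟨sub_eq_zero.1 hν', sub_eq_zero.1 hα'⟩
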